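/- With b_n = 2^n·(6n+1)!!/(2n)! and B_n(x) = (1/6)·Σ_{j=1}^{n} 108^j·b_{n−j}·(x+n)_{[j−1]}, the following identity of rational functions holds for all n ≥ 1: B_n(x) + b_n/(6x+1) = −3·(B_{n−1}(x+1) + b_{n−1}/(6x+7))·(6x+5)(6x+7)/x + (2^n·(x+n)/(6x+1))·((6n−1)!!/((2n)!·x)) + 216·(x+n)·(B_{n−1}(x) + b_{n−1}/(6x+1)). -/

import Mathlib

open Polynomial

/-- The odd double factorial: `oddFac k = (2k+1)!! = 1·3·5···(2k+1)`. -/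
def oddFac (k : ℕ) : ℕ := ∏ i ∈ Finset.range (k+1), (2*i+1)

/-- `bSeq n = 2^n·(6n+1)!!/(2n)!` as a rational number. -/
def bSeq (n : ℕ) : ℚ := 2^n * oddFac (3*n) / (2*n).factorial

/-- The falling factorial `(p)_{[j]} = p(p-1)···(p-j+1)` of a polynomial `p`, with
`(p)_{[0]} = 1`. -/
noncomputable def ff (p : Polynomial ℚ) (j : ℕ) : Polynomial ℚ :=
  ∏ i ∈ Finset.range j, (p - Polynomial.C (i : ℚ))

/-- The polynomial `B_n(x) = (1/6)·Σ_{j=1}^{n} 108^j·b_{n−j}·(x+n)_{[j−1]}`. -/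
noncomputable def Bpoly (n : ℕ) : Polynomial ℚ :=
  Polynomial.C (1/6 : ℚ) *
    ∑ j ∈ Finset.Icc 1 n,
      Polynomial.C ((108:ℚ)^j * bSeq (n-j)) * ff (Polynomial.X + Polynomial.C (n:ℚ)) (j-1)

noncomputable section

/-- The image of `B_n` in the field of rational functions `ℚ(x)`. -/
def Bf (n : ℕ) : RatFunc ℚ := algebraMap (Polynomial ℚ) (RatFunc ℚ) (Bpoly n)

/-- The image of `B_n(x+1)` in `ℚ(x)`. -/
def BfShiftUp (n : ℕ) : RatFunc ℚ :=
  algebraMap (Polynomial ℚ) (RatFunc ℚ) ((Bpoly n).comp (Polynomial.X + 1))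

/-- The image of `B_n(x-1)` in `ℚ(x)`. -/
def BfShiftDown (n : ℕ) : RatFunc ℚ :=
  algebraMap (Polynomial ℚ) (RatFunc ℚ) ((Bpoly n).comp (Polynomial.X - 1))

/-- The generator `x` of `ℚ(x)`. -/
def Xr : RatFunc ℚ := RatFunc.X

/-- Constant rational functions. -/
def cst (a : ℚ) : RatFunc ℚ := RatFunc.C a

end

/-!
Let `P_n = (6x+1)·B_n(x) + b_n` be the numerator of `B_n(x) + b_n/(6x+1)` and
`a_n = 2^n·(6n−1)!!/(2n)!`. Peeling off the `j = 1` term of `B_{n+1}` gives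
`B_{n+1}(x) = 18·b_n + 108·(x+n+1)·B_n(x)`, and since `b_{n+1} − (108n+90)·b_n = a_{n+1}` this
becomes `P_{n+1} = 108·(x+n+1)·P_n + a_{n+1}`. Multiplied by `x(6x+1)` the identity reads
`x·P_n(x) + 3(6x+1)(6x+5)·P_{n−1}(x+1) = (x+n)·a_n + 216·x·(x+n)·P_{n−1}(x)`,
which follows by induction on `n` from that recurrence and `(n+1)·a_{n+1} = (108·n(n+1)+15)·a_n`.
-/

/-- `a_n = 2^n·(6n−1)!!/(2n)!`; the value `a_0 = 1` is junk (`3*0-1 = 0` in `ℕ`) and never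
used. -/
def aSeq (n : ℕ) : ℚ := 2^n * oddFac (3*n-1) / (2*n).factorial

lemma oddFac_succ (m : ℕ) : oddFac (m+1) = oddFac m * (2*m+3) := by
  unfold oddFac
  rw [Finset.prod_range_succ]
  ring

lemma bSeq_zero : bSeq 0 = 1 := by norm_num [bSeq, oddFac]

lemma aSeq_one : aSeq 1 = 15 := by norm_num [aSeq, oddFac, Finset.prod_range_succ]

lemma succ_mul_bSeq_succ (k : ℕ) :
    ((k:ℚ)+1) * bSeq (k+1) = 3 * (6*k+5) * (6*k+7) * bSeq k := by
  rw [bSeq, bSeq, show 3*(k+1) = 3*k+1+1+1 by ring, oddFac_succ, oddFac_succ, oddFac_succ,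
    show 2*(k+1) = 2*k+1+1 by ring, Nat.factorial_succ, Nat.factorial_succ]
  have : ((2*k).factorial : ℚ) ≠ 0 := by positivity
  push_cast
  field_simp
  ring

lemma succ_mul_aSeq_succ (k : ℕ) :
    ((k:ℚ)+1) * aSeq (k+1) = 3 * (6*k+5) * bSeq k := by
  rw [aSeq, bSeq, show 3*(k+1)-1 = 3*k+1+1 by omega, oddFac_succ, oddFac_succ,
    show 2*(k+1) = 2*k+1+1 by ring, Nat.factorial_succ, Nat.factorial_succ]
  have : ((2*k).factorial : ℚ) ≠ 0 := by positivity
  push_cast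
  field_simp
  ring

lemma bSeq_succ_sub (k : ℕ) : bSeq (k+1) - (108*k+90) * bSeq k = aSeq (k+1) := by
  have hk : (k:ℚ)+1 ≠ 0 := by positivity
  refine mul_left_cancel₀ hk ?_
  linear_combination succ_mul_bSeq_succ k - succ_mul_aSeq_succ k

lemma aSeq_succ_succ (k : ℕ) :
    ((k:ℚ)+2) * aSeq (k+2) = (108*(k+1)*(k+2)+15) * aSeq (k+1) := by
  have hk : (k:ℚ)+1 ≠ 0 := by positivity
  refine mul_left_cancel₀ hk ?_
  have h₂ := succ_mul_aSeq_succ (k+1)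
  push_cast at h₂
  linear_combination (k+1) * h₂ + 3 * (6*(k:ℚ)+11) * succ_mul_bSeq_succ k
    - (108*((k:ℚ)+1)*(k+2)+15) * succ_mul_aSeq_succ k

lemma ff_succ (p : ℚ[X]) (j : ℕ) : ff p (j+1) = p * ff (p - 1) j := by
  rw [ff, ff, Finset.prod_range_succ', mul_comm]
  simp only [Nat.cast_zero, C_0, sub_zero, Nat.cast_succ, C_add, C_1, sub_add_eq_sub_sub_swap]

lemma sum_Icc_one_eq_sum_range {M : Type*} [AddCommMonoid M] (n : ℕ) (f : ℕ → M) :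
    ∑ j ∈ Finset.Icc 1 n, f j = ∑ i ∈ Finset.range n, f (i+1) := by
  rw [Finset.range_eq_Ico, Finset.sum_Ico_add']
  rfl

lemma Bpoly_zero : Bpoly 0 = 0 := by simp [Bpoly]

lemma Bpoly_succ (n : ℕ) :
    Bpoly (n+1) = C (18 * bSeq n) + 108 * (X + (n + 1 : ℚ[X])) * Bpoly n := by
  have hshift : X + C ((n + 1 : ℕ) : ℚ) - 1 = X + C (n : ℚ) := by
    rw [Nat.cast_succ, C_add, C_1]; ring
  have hterm (i : ℕ) :
      C ((108:ℚ)^(i+1+1) * bSeq (n+1-(i+1+1))) * ff (X + C ((n+1 : ℕ) : ℚ)) (i+1+1-1)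
        = 108 * (X + (n + 1 : ℚ[X])) *
            (C ((108:ℚ)^(i+1) * bSeq (n-(i+1))) * ff (X + C (n:ℚ)) i) := by
    rw [Nat.add_sub_cancel, Nat.add_sub_add_right, ff_succ, hshift, pow_succ, mul_comm _ (108:ℚ),
      mul_assoc, C_mul, C_mul, ← C_eq_natCast, Nat.cast_succ, C_add, C_1]
    simp only [map_ofNat]
    ring
  rw [Bpoly, Bpoly, sum_Icc_one_eq_sum_range, sum_Icc_one_eq_sum_range, Finset.sum_range_succ',
    Finset.sum_congr rfl fun i _ => hterm i, ← Finset.mul_sum]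
  simp only [zero_add, pow_one, Nat.add_sub_cancel, Nat.sub_self, ff, Finset.range_zero,
    Finset.prod_empty, mul_one, C_mul, map_ofNat]
  have h18 : C (1/6 : ℚ) * 108 = 18 := by
    rw [← map_ofNat C 108, ← map_ofNat C 18, ← C_mul]; norm_num
  linear_combination C (bSeq n) * h18

noncomputable def Bnum (n : ℕ) : ℚ[X] := (6 * X + 1) * Bpoly n + C (bSeq n)

lemma Bnum_zero : Bnum 0 = 1 := by simp [Bnum, Bpoly_zero, bSeq_zero]

lemma Bnum_succ (n : ℕ) :
    Bnum (n+1) = 108 * (X + (n + 1 : ℚ[X])) * Bnum n + C (aSeq (n+1)) := by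
  have hb := congrArg C (bSeq_succ_sub n)
  simp only [map_sub, map_mul, map_add, map_natCast, map_ofNat] at hb
  rw [Bnum, Bnum, Bpoly_succ, C_mul, map_ofNat]
  linear_combination hb

lemma Bnum_comp_X_add_one (n : ℕ) :
    (Bnum n).comp (X + 1) = (6 * X + 7) * (Bpoly n).comp (X + 1) + C (bSeq n) := by
  simp only [Bnum, add_comp, mul_comp, ofNat_comp, X_comp, one_comp, C_comp]
  ring

lemma Bnum_succ_comp_X_add_one (n : ℕ) :
    (Bnum (n+1)).comp (X + 1)
      = 108 * (X + (n + 2 : ℚ[X])) * (Bnum n).comp (X + 1) + C (aSeq (n+1)) := by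
  simp only [Bnum_succ, add_comp, mul_comp, ofNat_comp, X_comp, one_comp, C_comp, natCast_comp]
  ring

lemma Bnum_identity (k : ℕ) :
    X * Bnum (k+1) + 3 * (6 * X + 1) * (6 * X + 5) * (Bnum k).comp (X + 1)
      = (X + (k + 1 : ℚ[X])) * C (aSeq (k+1)) + 216 * X * (X + (k + 1 : ℚ[X])) * Bnum k := by
  induction k with
  | zero =>
    simp only [Bnum_succ, Bnum_zero, one_comp, zero_add, aSeq_one, Nat.cast_zero, map_ofNat]
    ring
  | succ k ih =>
    have ha := congrArg C (aSeq_succ_succ k)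
    simp only [map_add, map_mul, map_natCast, map_ofNat, map_one] at ha
    rw [Bnum_succ (k+1), Bnum_succ_comp_X_add_one k]
    rw [Bnum_succ k] at ih ⊢
    push_cast
    linear_combination 108 * (X + (k + 2 : ℚ[X])) * ih - ha

lemma algebraMap_Bnum (n : ℕ) :
    algebraMap ℚ[X] (RatFunc ℚ) (Bnum n) = (6 * Xr + 1) * Bf n + cst (bSeq n) := by
  simp only [Bnum, Bf, Xr, cst, map_add, map_mul, map_ofNat, map_one, RatFunc.algebraMap_X,
    RatFunc.algebraMap_C]

lemma algebraMap_Bnum_comp_X_add_one (n : ℕ) :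
    algebraMap ℚ[X] (RatFunc ℚ) ((Bnum n).comp (X + 1))
      = (6 * Xr + 7) * BfShiftUp n + cst (bSeq n) := by
  simp only [Bnum_comp_X_add_one, BfShiftUp, Xr, cst, map_add, map_mul, map_ofNat,
    RatFunc.algebraMap_X, RatFunc.algebraMap_C]

lemma six_mul_Xr_add_ne_zero (c : ℚ) : 6 * Xr + cst c ≠ 0 := by
  rw [Xr, cst, ← RatFunc.algebraMap_X, ← RatFunc.algebraMap_C,
    ← map_ofNat (algebraMap ℚ[X] _), ← map_mul, ← map_add]
  refine RatFunc.algebraMap_ne_zero fun h => ?_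
  simpa using congrArg (coeff · 1) h

lemma cst_aSeq_mul_factorial (n : ℕ) :
    cst (aSeq n) * cst ((2*n).factorial : ℚ) = 2^n * cst (oddFac (3*n-1) : ℚ) := by
  have hfac : ((2*n).factorial : ℚ) ≠ 0 := by positivity
  unfold cst
  rw [← map_mul, aSeq, div_mul_cancel₀ _ hfac, map_mul, map_pow, map_ofNat]

/-- The identity in `ℚ(x)`, for `n ≥ 1`:
`B_n(x) + b_n/(6x+1) = −3·(B_{n−1}(x+1) + b_{n−1}/(6x+7))·(6x+5)(6x+7)/x
 + (2^n·(x+n)/(6x+1))·((6n−1)!!/((2n)!·x)) + 216·(x+n)·(B_{n−1}(x) + b_{n−1}/(6x+1))`. -/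
theorem stmt4 (n : ℕ) (hn : 1 ≤ n) :
    Bf n + cst (bSeq n) / (6*Xr+1)
      = -3 * (BfShiftUp (n-1) + cst (bSeq (n-1)) / (6*Xr+7)) * ((6*Xr+5)*(6*Xr+7)) / Xr
        + (2^n * (Xr + (n : RatFunc ℚ)) / (6*Xr+1)) *
            (cst ((oddFac (3*n-1) : ℚ)) / (cst ((2*n).factorial : ℚ) * Xr))
        + 216 * (Xr + (n : RatFunc ℚ)) * (Bf (n-1) + cst (bSeq (n-1)) / (6*Xr+1)) := by
  obtain ⟨k, rfl⟩ := Nat.exists_eq_add_of_le' hn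
  have key := congrArg (algebraMap ℚ[X] (RatFunc ℚ)) (Bnum_identity k)
  simp only [map_add, map_mul, map_ofNat, map_natCast, map_one, RatFunc.algebraMap_X,
    RatFunc.algebraMap_C, algebraMap_Bnum, algebraMap_Bnum_comp_X_add_one] at key
  have h1 : 6 * Xr + 1 ≠ 0 := by simpa [cst] using six_mul_Xr_add_ne_zero 1
  have h7 : 6 * Xr + 7 ≠ 0 := by simpa [cst] using six_mul_Xr_add_ne_zero 7
  have hX : Xr ≠ 0 := RatFunc.X_ne_zero
  have hfac : cst ((2 * (k+1)).factorial : ℚ) ≠ 0 := by simp [cst, Nat.factorial_ne_zero]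
  rw [Nat.add_sub_cancel]
  field_simp
  have ha := cst_aSeq_mul_factorial (k+1)
  simp only [Xr, cst] at key ha ⊢
  push_cast at key ⊢
  linear_combination
    RatFunc.C ((2 * (k+1)).factorial : ℚ) * key + (RatFunc.X + (k + 1 : RatFunc ℚ)) * ha
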